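/- arXiv:math/0606594 — 5 statements merged into one kernel-verified Lean document; each statement's English description precedes it below -/
import Mathlib

section
/- (Bartle–Graves Selection Theorem.) Let E and F be Banach spaces, and let q : E → F be a continuous surjective linear map. Then there exists a continuous function g : F → E (not necessarily linear) such that q ∘ g = id_F. -/
/-!
By the open mapping theorem `q` has a right inverse `σ` with `‖σ y‖ ≤ C ‖y‖`, which need not be
continuous. Since `σ y₀` solves `q x = y` up to an error `≤ ‖y‖ / 2` for every `y` near `y₀ ≠ 0`,
and these approximate solutions form convex sets, a partition of unity on `F ∖ {0}` glues them
into a continuous `h` with `‖h y‖ ≤ 2C ‖y‖` and `‖y - q (h y)‖ ≤ ‖y‖ / 2`, and `h 0 = 0`.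
With `T y = y - q (h y)` we have `‖Tⁿ y‖ ≤ 2⁻ⁿ ‖y‖`, so `g y = ∑ₙ h (Tⁿ y)` converges locally
uniformly, and `q (g y)` telescopes to `y`.
-/

open Filter Topology Metric

theorem HasSum.eq_sub_of_tendsto {G : Type*} [AddCommGroup G] [TopologicalSpace G]
    [IsTopologicalAddGroup G] [T2Space G] {x : ℕ → G} {a s : G}
    (hs : HasSum (fun n => x n - x (n + 1)) s) (hx : Tendsto x atTop (𝓝 a)) : s = x 0 - a := by
  refine tendsto_nhds_unique hs.tendsto_sum_nat ?_
  simpa only [Finset.sum_range_sub'] using tendsto_const_nhds.sub hx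

theorem norm_iterate_le_pow_mul {E : Type*} [SeminormedAddCommGroup E] {T : E → E} {r : ℝ}
    (hr : 0 ≤ r) (hT : ∀ x, ‖T x‖ ≤ r * ‖x‖) (n : ℕ) (x : E) : ‖T^[n] x‖ ≤ r ^ n * ‖x‖ := by
  induction n with
  | zero => simp
  | succ n ih =>
    calc ‖T^[n + 1] x‖ = ‖T (T^[n] x)‖ := by rw [Function.iterate_succ_apply']
      _ ≤ r * (r ^ n * ‖x‖) := (hT _).trans (mul_le_mul_of_nonneg_left ih hr)
      _ = r ^ (n + 1) * ‖x‖ := by ring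

theorem continuous_tsum_of_norm_le_mul_norm {ι E F : Type*} [NormedAddCommGroup E]
    [NormedAddCommGroup F] [CompleteSpace F] {f : ι → E → F} {u : ι → ℝ}
    (hf : ∀ i, Continuous (f i)) (hu : Summable u) (hfu : ∀ i x, ‖f i x‖ ≤ u i * ‖x‖) :
    Continuous fun x => ∑' i, f i x := by
  refine continuous_iff_continuousAt.2 fun x₀ => ?_
  have hx₀ : x₀ ∈ ball (0 : E) (‖x₀‖ + 1) := by simp
  refine (continuousOn_tsum (fun i => (hf i).continuousOn) (hu.abs.mul_right (‖x₀‖ + 1))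
    fun i x hx => ?_).continuousAt (isOpen_ball.mem_nhds hx₀)
  rw [mem_ball_zero_iff] at hx
  calc ‖f i x‖ ≤ |u i| * ‖x‖ := (hfu i x).trans (by gcongr; exact le_abs_self _)
    _ ≤ |u i| * (‖x₀‖ + 1) := by gcongr

theorem continuous_of_continuousOn_compl_zero_of_norm_le {E F : Type*} [NormedAddCommGroup E]
    [NormedAddCommGroup F] {f : E → F} {C : ℝ} (hf : ContinuousOn f {0}ᶜ)
    (hC : ∀ x, ‖f x‖ ≤ C * ‖x‖) : Continuous f := by
  refine continuous_iff_continuousAt.2 fun x => ?_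
  rcases eq_or_ne x 0 with rfl | hx
  · have hf0 : f 0 = 0 := norm_le_zero_iff.1 (by simpa using hC 0)
    rw [ContinuousAt, hf0]
    refine squeeze_zero_norm hC ?_
    exact (continuous_const.mul continuous_norm : Continuous fun x : E => C * ‖x‖).tendsto' 0 0
      (by simp)
  · exact hf.continuousAt (isOpen_compl_singleton.mem_nhds hx)

section Iteration

variable {R E F : Type*} [Semiring R] [NormedAddCommGroup E] [Module R E] [CompleteSpace E]
  [NormedAddCommGroup F] [Module R F]

theorem ContinuousLinearMap.exists_continuous_rightInverse_of_approx (q : E →L[R] F)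
    {h : F → E} (hh : Continuous h) {C r : ℝ} (hC : 0 ≤ C) (hr₀ : 0 ≤ r) (hr₁ : r < 1)
    (hbound : ∀ y, ‖h y‖ ≤ C * ‖y‖) (happrox : ∀ y, ‖y - q (h y)‖ ≤ r * ‖y‖) :
    ∃ g : F → E, Continuous g ∧ ∀ y, q (g y) = y := by
  set T : F → F := fun y => y - q (h y)
  have hT : ∀ n y, ‖T^[n] y‖ ≤ r ^ n * ‖y‖ := norm_iterate_le_pow_mul hr₀ happrox
  have hterm : ∀ n y, ‖h (T^[n] y)‖ ≤ C * r ^ n * ‖y‖ := fun n y =>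
    calc ‖h (T^[n] y)‖ ≤ C * ‖T^[n] y‖ := hbound _
      _ ≤ C * (r ^ n * ‖y‖) := mul_le_mul_of_nonneg_left (hT n y) hC
      _ = C * r ^ n * ‖y‖ := by ring
  have hgeom : Summable fun n => C * r ^ n :=
    (summable_geometric_of_lt_one hr₀ hr₁).mul_left C
  refine ⟨fun y => ∑' n, h (T^[n] y), ?_, fun y => ?_⟩
  · exact continuous_tsum_of_norm_le_mul_norm
      (fun n => hh.comp ((continuous_id.sub (q.continuous.comp hh)).iterate n)) hgeom hterm
  · have hqh : ∀ z, q (h z) = z - T z := fun z => (sub_sub_cancel z _).symm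
    have hsum : HasSum (fun n => T^[n] y - T^[n + 1] y) (q (∑' n, h (T^[n] y))) := by
      simpa only [hqh, Function.iterate_succ_apply'] using
        q.hasSum (Summable.of_norm_bounded (hgeom.mul_right ‖y‖) (hterm · y)).hasSum
    have hlim : Tendsto (fun n => T^[n] y) atTop (𝓝 0) := by
      refine squeeze_zero_norm (hT · y) ?_
      simpa using (tendsto_pow_atTop_nhds_zero_of_lt_one hr₀ hr₁).mul_const ‖y‖
    simpa using hsum.eq_sub_of_tendsto hlim

end Iteration

namespace ContinuousLinearMap.NonlinearRightInverse

variable {E F : Type*} [NormedAddCommGroup E] [NormedSpace ℝ E] [NormedAddCommGroup F]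
  [NormedSpace ℝ F] {f : E →L[ℝ] F}

theorem exists_continuous_approx (σ : f.NonlinearRightInverse) :
    ∃ h : F → E, Continuous h ∧ ∀ y, ‖h y‖ ≤ 2 * σ.nnnorm * ‖y‖ ∧ ‖y - f (h y)‖ ≤ ‖y‖ / 2 := by
  set t : ({0}ᶜ : Set F) → Set E := fun y =>
    closedBall 0 (2 * σ.nnnorm * ‖(y : F)‖) ∩ f ⁻¹' closedBall (y : F) (‖(y : F)‖ / 2)
  have ht : ∀ y, Convex ℝ (t y) := fun y =>
    (convex_closedBall _ _).inter ((convex_closedBall _ _).linear_preimage f.toLinearMap)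
  -- `σ y₀` already lies in `t y` for all `y` within `‖y₀‖ / 3` of `y₀`
  have hloc : ∀ y₀, ∃ c, ∀ᶠ y in 𝓝 y₀, c ∈ t y := by
    intro y₀
    have hy₀ : 0 < ‖(y₀ : F)‖ / 3 := div_pos (norm_pos_iff.2 y₀.2) three_pos
    refine ⟨σ y₀, ?_⟩
    filter_upwards [continuous_subtype_val.continuousAt.eventually (ball_mem_nhds _ hy₀)]
      with y hy
    rw [dist_eq_norm] at hy
    have hyy₀ : ‖(y₀ : F)‖ ≤ 3 / 2 * ‖(y : F)‖ := by
      linarith [norm_le_norm_add_norm_sub' (y₀ : F) (y : F), norm_sub_rev (y : F) y₀]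
    refine ⟨?_, ?_⟩
    · rw [mem_closedBall_zero_iff]
      calc ‖σ y₀‖ ≤ σ.nnnorm * ‖(y₀ : F)‖ := σ.bound _
        _ ≤ σ.nnnorm * (2 * ‖(y : F)‖) := by gcongr; linarith [norm_nonneg (y : F)]
        _ = 2 * σ.nnnorm * ‖(y : F)‖ := by ring
    · rw [Set.mem_preimage, σ.right_inv, mem_closedBall', dist_eq_norm]
      linarith
  obtain ⟨g, hg⟩ := exists_continuous_forall_mem_convex_of_local_const ht hloc
  set h := Function.extend Subtype.val g 0
  have hext : ∀ y : ({0}ᶜ : Set F), h y = g y := Subtype.val_injective.extend_apply g 0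
  have hh : ∀ y, ‖h y‖ ≤ 2 * σ.nnnorm * ‖y‖ ∧ ‖y - f (h y)‖ ≤ ‖y‖ / 2 := by
    intro y
    rcases eq_or_ne y 0 with rfl | hy
    · simp [h]
    · obtain ⟨hnorm, happrox⟩ := hg ⟨y, hy⟩
      rw [mem_closedBall_zero_iff] at hnorm
      rw [Set.mem_preimage, mem_closedBall', dist_eq_norm] at happrox
      rw [show h y = g ⟨y, hy⟩ from hext ⟨y, hy⟩]
      exact ⟨hnorm, happrox⟩
  refine ⟨h, continuous_of_continuousOn_compl_zero_of_norm_le ?_ fun y => (hh y).1, hh⟩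
  rw [continuousOn_iff_continuous_domRestrict]
  convert g.continuous
  exact funext hext

end ContinuousLinearMap.NonlinearRightInverse

/-- **Bartle–Graves Selection Theorem.** If `q : E → F` is a continuous surjective
linear map between Banach spaces, then there is a continuous (not necessarily linear)
function `g : F → E` with `q ∘ g = id`. -/
theorem bartle_graves_selection {𝕜 : Type*} [RCLike 𝕜]
    {E F : Type*} [NormedAddCommGroup E] [NormedSpace 𝕜 E] [CompleteSpace E]
    [NormedAddCommGroup F] [NormedSpace 𝕜 F] [CompleteSpace F]
    (q : E →L[𝕜] F) (hq : Function.Surjective q) :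
    ∃ g : F → E, Continuous g ∧ ∀ ξ : F, q (g ξ) = ξ := by
  let : NormedSpace ℝ E := .restrictScalars ℝ 𝕜 E
  let : NormedSpace ℝ F := .restrictScalars ℝ 𝕜 F
  have : IsScalarTower ℝ 𝕜 E := .restrictScalars ℝ 𝕜 E
  have : IsScalarTower ℝ 𝕜 F := .restrictScalars ℝ 𝕜 F
  obtain ⟨σ, -⟩ := (q.restrictScalars ℝ).exists_nonlinearRightInverse_of_surjective
    (LinearMap.range_eq_top.2 hq)
  obtain ⟨h, hh, hσh⟩ := σ.exists_continuous_approx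
  exact q.exists_continuous_rightInverse_of_approx (r := 1 / 2) hh (by positivity) (by norm_num)
    (by norm_num) (fun y => (hσh y).1) fun y => (hσh y).2.trans_eq (by ring)
end

section
/- Let E and F be Banach spaces, and let q : E → F be a continuous surjective linear map. Let M ⊆ E and N ⊆ F be closed linear subspaces such that q(M) = N, and let f : N → M be a continuous function such that q(f(ξ)) = ξ for all ξ ∈ N. Then there exists a continuous function g : F → E such that q ∘ g = id_F and g restricted to N equals f. -/
/-!
Put `p = π ∘ q : E → F ⧸ N`, where `π` is the quotient map; `F ⧸ N` is a Banach space since `N`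
is closed. By the Bartle–Graves theorem `p` has a continuous right inverse `σ` with `σ 0 = 0`,
and then `g ξ = σ (π ξ) + f (ξ - q (σ (π ξ)))` works: the argument of `f` lies in `N`
because `p (σ (π ξ)) = π ξ`, and on `N` the first summand vanishes.

Bartle–Graves: the open mapping theorem gives preimages with `‖x‖ ≤ C ‖y‖`; a partition of unity
glues them into continuous maps `w` with `‖q (w y) - y‖ < ε` and `‖w y‖ < C ‖y‖ + ε`. Applying
such maps with `ε = 2⁻ⁿ` to the successive remainders gives a geometrically convergent series of
continuous maps whose sum is a continuous right inverse of `q`.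
-/

open Function Metric Filter Topology

theorem ContinuousLinearMap.exists_continuous_rightInverse_extending {R E F : Type*} [Ring R]
    [TopologicalSpace E] [AddCommGroup E] [ContinuousAdd E] [Module R E]
    [TopologicalSpace F] [AddCommGroup F] [ContinuousSub F] [Module R F]
    (q : E →L[R] F) (N : Submodule R F) {σ : F ⧸ N → E} (hσc : Continuous σ)
    (hσq : ∀ z, N.mkQ (q (σ z)) = z) (hσ0 : σ 0 = 0) {f : N → E} (hfc : Continuous f)
    (hfq : ∀ ξ : N, q (f ξ) = ξ) :
    ∃ g : F → E, Continuous g ∧ RightInverse g q ∧ ∀ ξ : N, g ξ = f ξ := by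
  have hmem (ξ : F) : ξ - q (σ (N.mkQ ξ)) ∈ N :=
    (Submodule.Quotient.eq N).1 (hσq (N.mkQ ξ)).symm
  have hσN (ξ : N) : σ (N.mkQ ξ) = 0 := by
    rw [Submodule.mkQ_apply, (Submodule.Quotient.mk_eq_zero N).2 ξ.2, hσ0]
  refine ⟨fun ξ => σ (N.mkQ ξ) + f ⟨_, hmem ξ⟩, ?_, fun ξ => ?_, fun ξ => ?_⟩
  · have hh : Continuous fun ξ => σ (N.mkQ ξ) := hσc.comp continuous_quot_mk
    exact hh.add (hfc.comp ((continuous_id.sub (q.continuous.comp hh)).subtype_mk _))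
  · simp only [map_add, hfq, add_sub_cancel]
  · simp only [hσN, map_zero, sub_zero, zero_add]

namespace ContinuousLinearMap

variable {E F : Type*} [NormedAddCommGroup E] [NormedSpace ℝ E]
  [NormedAddCommGroup F] [NormedSpace ℝ F]

theorem exists_continuous_approx_rightInverse (q : E →L[ℝ] F) {C : ℝ}
    (hC : ∀ y, ∃ x, q x = y ∧ ‖x‖ ≤ C * ‖y‖) {ε : ℝ} (hε : 0 < ε) :
    ∃ w : F → E, Continuous w ∧ ∀ y, dist (q (w y)) y < ε ∧ ‖w y‖ < C * ‖y‖ + ε := by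
  set t : F → Set E := fun y => q ⁻¹' ball y ε ∩ ball 0 (C * ‖y‖ + ε)
  have ht (y : F) : Convex ℝ (t y) :=
    ((convex_ball y ε).linear_preimage q.toLinearMap).inter (convex_ball 0 _)
  have hloc (y₀ : F) : ∃ x, ∀ᶠ y in 𝓝 y₀, x ∈ t y := by
    obtain ⟨x, rfl, hx⟩ := hC y₀
    have hcont : Continuous fun y : F => C * ‖y‖ + ε := by fun_prop
    refine ⟨x, ?_⟩
    filter_upwards [ball_mem_nhds (q x) hε,
      (hcont.tendsto (q x)).eventually_const_lt (lt_add_of_le_of_pos hx hε)] with y hy hyC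
    exact ⟨mem_ball_comm.1 hy, mem_ball_zero_iff.2 hyC⟩
  obtain ⟨w, hw⟩ := exists_continuous_forall_mem_convex_of_local_const ht hloc
  exact ⟨w, w.continuous, fun y => ⟨(hw y).1, mem_ball_zero_iff.1 (hw y).2⟩⟩

def residual (q : E →L[ℝ] F) (w : ℕ → F → E) : ℕ → F → F
  | 0, y => y
  | n + 1, y => residual q w n y - q (w n (residual q w n y))

theorem continuous_residual (q : E →L[ℝ] F) {w : ℕ → F → E} (hw : ∀ n, Continuous (w n))
    (n : ℕ) : Continuous (q.residual w n) := by
  induction n with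
  | zero => exact continuous_id
  | succ n ih => exact ih.sub (q.continuous.comp ((hw n).comp ih))

theorem map_sum_residual (q : E →L[ℝ] F) (w : ℕ → F → E) (n : ℕ) (y : F) :
    q (∑ k ∈ Finset.range n, w k (q.residual w k y)) = y - q.residual w n y := by
  induction n with
  | zero => simp [residual]
  | succ n ih =>
    rw [Finset.sum_range_succ, map_add, ih, residual]
    abel

theorem exists_continuous_rightInverse_of_residual [CompleteSpace E] (q : E →L[ℝ] F)
    {w : ℕ → F → E} (hw : ∀ n, Continuous (w n)) {b : ℕ → ℝ} (hb : Summable b)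
    (hwb : ∀ n y, ‖w (n + 1) (q.residual w (n + 1) y)‖ ≤ b n)
    (hres : ∀ y, Tendsto (fun n => q.residual w n y) atTop (𝓝 0)) :
    ∃ s : F → E, Continuous s ∧ RightInverse s q := by
  set u : ℕ → F → E := fun n y => w n (q.residual w n y)
  have hu (y : F) : Summable fun n => u n y :=
    (summable_nat_add_iff 1).1 (hb.of_norm_bounded (hwb · y))
  refine ⟨fun y => ∑' n, u n y, ?_, fun y => ?_⟩
  · simp_rw [(hu _).tsum_eq_zero_add]
    exact ((hw 0).comp (q.continuous_residual hw 0)).add <|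
      continuous_tsum (fun n => (hw _).comp (q.continuous_residual hw _)) hb hwb
  · have h := (q.continuous.tendsto _).comp (hu y).hasSum.tendsto_sum_nat
    have h' : Tendsto (fun n => y - q.residual w n y) atTop (𝓝 y) := by
      simpa using tendsto_const_nhds.sub (hres y)
    exact tendsto_nhds_unique (h.congr fun n => q.map_sum_residual w n y) h'

theorem exists_continuous_rightInverse_of_surjective [CompleteSpace E] [CompleteSpace F]
    (q : E →L[ℝ] F) (hq : Surjective q) :
    ∃ s : F → E, Continuous s ∧ RightInverse s q ∧ s 0 = 0 := by
  obtain ⟨C, hC0, hC⟩ := q.exists_preimage_norm_le hq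
  choose w hwc hw using fun n : ℕ =>
    q.exists_continuous_approx_rightInverse hC (pow_pos (one_half_pos (α := ℝ)) n)
  have hres (n : ℕ) (y : F) : ‖q.residual w (n + 1) y‖ < (1 / 2) ^ n := by
    rw [residual, norm_sub_rev, ← dist_eq_norm]
    exact (hw n _).1
  have hwb (n : ℕ) (y : F) : ‖w (n + 1) (q.residual w (n + 1) y)‖ ≤ (C + 1) * (1 / 2) ^ n := by
    calc ‖w (n + 1) (q.residual w (n + 1) y)‖
        ≤ C * ‖q.residual w (n + 1) y‖ + (1 / 2) ^ (n + 1) := (hw _ _).2.le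
      _ ≤ C * (1 / 2) ^ n + (1 / 2) ^ n := by
        gcongr C * ?_ + ?_
        · exact (hres n y).le
        · exact pow_le_pow_of_le_one (by norm_num) (by norm_num) n.le_succ
      _ = (C + 1) * (1 / 2) ^ n := by ring
  have hlim (y : F) : Tendsto (fun n => q.residual w n y) atTop (𝓝 0) := by
    rw [← tendsto_add_atTop_iff_nat 1]
    exact squeeze_zero_norm (fun n => (hres n y).le)
      (tendsto_pow_atTop_nhds_zero_of_lt_one (by norm_num) (by norm_num))
  obtain ⟨s, hsc, hsq⟩ := q.exists_continuous_rightInverse_of_residual hwc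
    ((summable_geometric_of_lt_one (by norm_num) (by norm_num)).mul_left _) hwb hlim
  exact ⟨fun y => s y - s 0, hsc.sub continuous_const, fun y => by simp [hsq y, hsq 0], sub_self _⟩

end ContinuousLinearMap

theorem relative_bartle_graves_selection_general {𝕜 : Type*} [RCLike 𝕜]
    {E F : Type*} [NormedAddCommGroup E] [NormedSpace 𝕜 E] [CompleteSpace E]
    [NormedAddCommGroup F] [NormedSpace 𝕜 F] [CompleteSpace F]
    (q : E →L[𝕜] F) (hq : Function.Surjective q)
    (N : Submodule 𝕜 F) (hN : IsClosed (N : Set F))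
    (f : N → E) (hf_cont : Continuous f)
    (hf_sec : ∀ ξ : N, q (f ξ) = ξ) :
    ∃ g : F → E, Continuous g ∧ (∀ ξ : F, q (g ξ) = ξ) ∧ ∀ ξ : N, g ξ = f ξ := by
  have : IsClosed (N : Set F) := hN
  let : NormedSpace ℝ E := NormedSpace.restrictScalars ℝ 𝕜 E
  let : NormedSpace ℝ (F ⧸ N) := NormedSpace.restrictScalars ℝ 𝕜 (F ⧸ N)
  obtain ⟨σ, hσc, hσq, hσ0⟩ :=
    ((N.mkQL ∘L q).restrictScalars ℝ).exists_continuous_rightInverse_of_surjective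
      (N.mkQ_surjective.comp hq)
  exact q.exists_continuous_rightInverse_extending N hσc hσq hσ0 hf_cont hf_sec

/-- Relative Bartle–Graves selection: a continuous section of a bounded linear
surjection `q : E → F` which is prescribed on a closed subspace `N ⊆ F` (taking values
in a closed subspace `M ⊆ E` with `q(M) = N`) by a given continuous section `f`. -/
theorem relative_bartle_graves_selection {𝕜 : Type*} [RCLike 𝕜]
    {E F : Type*} [NormedAddCommGroup E] [NormedSpace 𝕜 E] [CompleteSpace E]
    [NormedAddCommGroup F] [NormedSpace 𝕜 F] [CompleteSpace F]
    (q : E →L[𝕜] F) (hq : Function.Surjective q)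
    (M : Submodule 𝕜 E) (hM : IsClosed (M : Set E))
    (N : Submodule 𝕜 F) (hN : IsClosed (N : Set F))
    (hMN : q '' (M : Set E) = (N : Set F))
    (f : N → E) (hf_cont : Continuous f)
    (hf_mem : ∀ ξ : N, f ξ ∈ M)
    (hf_sec : ∀ ξ : N, q (f ξ) = ξ) :
    ∃ g : F → E, Continuous g ∧ (∀ ξ : F, q (g ξ) = ξ) ∧ ∀ ξ : N, g ξ = f ξ :=
  relative_bartle_graves_selection_general q hq N hN f hf_cont hf_sec
end

section
/- Let F be a Banach space and let N ⊆ F be a closed linear subspace. Then there exists a continuous retraction h : F → F, i.e. a continuous (not necessarily linear) map such that h(ξ) ∈ N for all ξ ∈ F and h(ξ) = ξ for all ξ ∈ N. -/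
/-!
Dugundji's construction. Off `s`, a partition of unity on the open set `sᶜ` glues points of `s`
chosen within twice the distance to `s` into a continuous map `g` into the convex set `s` with
`dist (g x) x < 2 * infDist x s`. Extending `g` by the identity on `s` gives a map moving every
`x` by less than `2 * dist x a` for each `a ∈ s`, which forces continuity along `s`.
-/

open Set Metric Filter Topology

namespace Convex

variable {E : Type*} [NormedAddCommGroup E] [NormedSpace ℝ E] {s : Set E}

theorem exists_continuous_compl_to_near_points (hconv : Convex ℝ s) (hclosed : IsClosed s)
    (hne : s.Nonempty) :
    ∃ g : C((sᶜ : Set E), E), ∀ x, g x ∈ s ∧ dist (g x) x < 2 * infDist (x : E) s := by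
  have hcont : Continuous fun y : (sᶜ : Set E) => 2 * infDist (y : E) s :=
    (continuous_infDist_pt s).comp continuous_subtype_val |>.const_mul 2
  exact exists_continuous_forall_mem_convex_of_local_const
    (t := fun y : (sᶜ : Set E) => s ∩ ball (y : E) (2 * infDist (y : E) s))
    (fun _ => hconv.inter (convex_ball _ _)) fun x => by
      have hpos : 0 < infDist (x : E) s := (hclosed.notMem_iff_infDist_pos hne).1 x.2
      obtain ⟨c, hcs, hxc⟩ := (infDist_lt_iff hne).1
        (by linarith : infDist (x : E) s < 2 * infDist (x : E) s)
      refine ⟨c, ?_⟩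
      have hnear : ∀ᶠ y : (sᶜ : Set E) in 𝓝 x, dist (y : E) c < 2 * infDist (y : E) s :=
        ((continuous_subtype_val.dist continuous_const).continuousAt).eventually_lt
          hcont.continuousAt hxc
      filter_upwards [hnear] with y hy
      exact ⟨hcs, by rwa [mem_ball, dist_comm]⟩

theorem exists_continuous_retraction (hconv : Convex ℝ s) (hclosed : IsClosed s)
    (hne : s.Nonempty) :
    ∃ h : E → E, Continuous h ∧ (∀ x, h x ∈ s) ∧ ∀ x ∈ s, h x = x := by
  classical
  obtain ⟨g, hg⟩ := hconv.exists_continuous_compl_to_near_points hclosed hne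
  set h : E → E := fun x => if hx : x ∈ s then x else g ⟨x, hx⟩
  have h_of_mem : ∀ x ∈ s, h x = x := fun x hx => dif_pos hx
  have h_of_notMem : ∀ x (hx : x ∉ s), h x = g ⟨x, hx⟩ := fun x hx => dif_neg hx
  have dist_le : ∀ a ∈ s, ∀ y, dist (h y) a ≤ 3 * dist y a := by
    intro a ha y
    by_cases hy : y ∈ s
    · rw [h_of_mem y hy]
      linarith [dist_nonneg (x := y) (y := a)]
    · rw [h_of_notMem y hy]
      have hga := (hg ⟨y, hy⟩).2
      have hya : infDist y s ≤ dist y a := infDist_le_dist_of_mem ha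
      linarith [dist_triangle (g ⟨y, hy⟩) y a]
  refine ⟨h, continuous_iff_continuousAt.2 fun x => ?_, fun x => ?_, h_of_mem⟩
  · by_cases hx : x ∈ s
    · refine continuousAt_of_locally_lipschitz one_pos 3 fun y _ => ?_
      rw [h_of_mem x hx]
      exact dist_le x hx y
    · refine (continuousOn_iff_continuous_domRestrict.2 ?_).continuousAt
        (hclosed.isOpen_compl.mem_nhds hx)
      convert g.continuous using 1
      exact funext fun y => h_of_notMem y y.2
  · by_cases hx : x ∈ s
    · rwa [h_of_mem x hx]
    · rw [h_of_notMem x hx]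
      exact (hg _).1

end Convex

theorem exists_continuous_retraction_onto_closed_subspace_general {𝕜 : Type*} [RCLike 𝕜]
    {F : Type*} [NormedAddCommGroup F] [NormedSpace 𝕜 F]
    (N : Submodule 𝕜 F) (hN : IsClosed (N : Set F)) :
    ∃ h : F → F, Continuous h ∧ (∀ ξ : F, h ξ ∈ N) ∧ ∀ ξ ∈ N, h ξ = ξ := by
  let : NormedSpace ℝ F := NormedSpace.restrictScalars ℝ 𝕜 F
  exact (N.restrictScalars ℝ).convex.exists_continuous_retraction hN ⟨0, N.zero_mem⟩

/-- Every closed linear subspace `N` of a Banach space `F` admits a continuous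
(not necessarily linear) retraction `h : F → F` onto `N`. -/
theorem exists_continuous_retraction_onto_closed_subspace {𝕜 : Type*} [RCLike 𝕜]
    {F : Type*} [NormedAddCommGroup F] [NormedSpace 𝕜 F] [CompleteSpace F]
    (N : Submodule 𝕜 F) (hN : IsClosed (N : Set F)) :
    ∃ h : F → F, Continuous h ∧ (∀ ξ : F, h ξ ∈ N) ∧ ∀ ξ ∈ N, h ξ = ξ :=
  exists_continuous_retraction_onto_closed_subspace_general N hN
end

section
/- Let B and D be C*-algebras, let A be a closed *-subalgebra of B, and let J be a closed two-sided ideal in D. Let π : D → D/J be the quotient map, and let κ : C_b([1,∞), D/J) → C_b([1,∞), D/J)/C₀([1,∞), D/J) be the quotient map. Let φ : B → C_b([1,∞), D/J)/C₀([1,∞), D/J) be a *-homomorphism, and suppose there is a *-homomorphism ρ : A → D/J such that for every a ∈ A, φ(a) is the class of the constant function t ↦ ρ(a). Then there exists a family of functions L = (L_t)_{t∈[1,∞)} from B to D (not necessarily linear) such that: (1) (t, b) ↦ L_t(b) is jointly continuous; (2) the family (L_t) is equicontinuous, i.e. for every b ∈ B and ε > 0 there is δ > 0 such that ‖c − b‖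 < δ implies ‖L_t(c) − L_t(b)‖ < ε for all t; (3) for every b ∈ B, the function t ↦ L_t(b) is bounded; (4) for every b ∈ B, the bounded continuous function t ↦ π(L_t(b)) in C_b([1,∞), D/J) is mapped by κ to φ(b); (5) for every a ∈ A, the function t ↦ L_t(a) is constant. -/
/-!
The heart of the matter is the Bartle–Graves theorem: a surjective bounded linear map `T`
between real Banach spaces has a continuous (nonlinear) right inverse, of linear growth.
A partition of unity gives, for each `ε > 0`, a continuous map that inverts `T` up to `ε`;
applying these with `ε = 2⁻ⁿ` to the successive residuals and summing the corrections gives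
a uniformly convergent series whose sum is an exact right inverse.

Applied to the quotient map `B → B/A` it gives a continuous retraction `r` of `B` onto `A`;
applied to `θ` a continuous right inverse `sθ`, bounded on bounded sets, so that `θ ∘ ·` is
onto on bounded continuous functions. Then `c b = const (sθ (ρ (r b)))` is a continuous map
`B → C_b([1,∞), D)` that already lifts `φ` on `A`, and a continuous right inverse `S` with
`S 0 = 0` of the surjection `K = κ ∘ (θ ∘ ·) : C_b([1,∞), D) → QDJ` corrects it: `M b = c b + S (φ b - K (c b))` lifts `φ` everywhere and agrees with `c` on `A`.
Then `L t b = M b t`, and continuity of `M` for the sup norm gives joint continuity and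
equicontinuity.
-/

open Filter BoundedContinuousFunction Metric
open scoped CStarAlgebra

section BartleGraves

variable {X Y : Type*} [NormedAddCommGroup X] [NormedSpace ℝ X]
  [NormedAddCommGroup Y] [NormedSpace ℝ Y]

namespace ContinuousLinearMap

theorem exists_continuous_approx_rightInverse_s6 (T : X →L[ℝ] Y) {C : ℝ} (hC : 0 ≤ C)
    (hT : ∀ y : Y, ∃ x, T x = y ∧ ‖x‖ ≤ C * ‖y‖) {ε : ℝ} (hε : 0 < ε) :
    ∃ g : C(Y, X), ∀ y, ‖T (g y) - y‖ ≤ ε ∧ ‖g y‖ ≤ C * (‖y‖ + ε) := by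
  have hloc (y₀ : Y) : ∃ x, ∀ᶠ y in nhds y₀,
      x ∈ T ⁻¹' closedBall y ε ∩ closedBall 0 (C * (‖y‖ + ε)) := by
    obtain ⟨x₀, rfl, hx₀⟩ := hT y₀
    refine ⟨x₀, mem_of_superset (closedBall_mem_nhds _ hε) fun y hy => ?_⟩
    rw [mem_closedBall, dist_eq_norm'] at hy
    have : ‖T x₀‖ ≤ ‖y‖ + ε := by linarith [norm_le_norm_add_norm_sub' (T x₀) y]
    exact ⟨by simpa [dist_eq_norm] using hy,
      by simpa using hx₀.trans (mul_le_mul_of_nonneg_left this hC)⟩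
  obtain ⟨g, hg⟩ := exists_continuous_forall_mem_convex_of_local_const
    (fun y => ((convex_closedBall y ε).linear_preimage T.toLinearMap).inter
      (convex_closedBall 0 _)) hloc
  exact ⟨g, fun y => by simpa [dist_eq_norm] using hg y⟩

def correctionResidual (T : X →L[ℝ] Y) (g : ℕ → Y → X) : ℕ → Y → Y
  | 0 => id
  | n + 1 => fun y => T.correctionResidual g n y - T (g n (T.correctionResidual g n y))

theorem continuous_correctionResidual (T : X →L[ℝ] Y) {g : ℕ → Y → X}
    (hg : ∀ n, Continuous (g n)) (n : ℕ) : Continuous (T.correctionResidual g n) := by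
  induction n with
  | zero => exact continuous_id
  | succ n ih => exact ih.sub (T.continuous.comp ((hg n).comp ih))

theorem sum_range_map_eq_sub_correctionResidual (T : X →L[ℝ] Y) (g : ℕ → Y → X) (N : ℕ)
    (y : Y) :
    ∑ n ∈ Finset.range N, T (g n (T.correctionResidual g n y)) =
      y - T.correctionResidual g N y := by
  simpa [correctionResidual] using Finset.sum_range_sub' (T.correctionResidual g · y) N

theorem norm_correctionResidual_succ_le (T : X →L[ℝ] Y) {g : ℕ → Y → X} {ε : ℕ → ℝ}
    (hg : ∀ n y, ‖T (g n y) - y‖ ≤ ε n) (n : ℕ) (y : Y) :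
    ‖T.correctionResidual g (n + 1) y‖ ≤ ε n := by
  simpa [correctionResidual, norm_sub_rev] using hg n (T.correctionResidual g n y)

theorem norm_correction_succ_le (T : X →L[ℝ] Y) {g : ℕ → Y → X} {C : ℝ} (hC : 0 ≤ C)
    (hg : ∀ n y, ‖T (g n y) - y‖ ≤ (1 / 2) ^ n ∧ ‖g n y‖ ≤ C * (‖y‖ + (1 / 2) ^ n))
    (n : ℕ) (y : Y) :
    ‖g (n + 1) (T.correctionResidual g (n + 1) y)‖ ≤ 2 * C * (1 / 2) ^ n := by
  have hr := T.norm_correctionResidual_succ_le (fun n y => (hg n y).1) n y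
  have hpow : (1 / 2 : ℝ) ^ (n + 1) ≤ (1 / 2) ^ n :=
    pow_le_pow_of_le_one (by norm_num) (by norm_num) n.le_succ
  calc _ ≤ C * (‖T.correctionResidual g (n + 1) y‖ + (1 / 2) ^ (n + 1)) := (hg _ _).2
    _ ≤ C * ((1 / 2) ^ n + (1 / 2) ^ n) := by gcongr
    _ = 2 * C * (1 / 2) ^ n := by ring

theorem exists_continuous_rightInverse [CompleteSpace X] [CompleteSpace Y]
    (T : X →L[ℝ] Y) (hT : Function.Surjective T) :
    ∃ s : Y → X, Continuous s ∧ Function.RightInverse s T ∧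
      ∃ C ≥ 0, ∀ y, ‖s y‖ ≤ C * (‖y‖ + 1) := by
  obtain ⟨C, hC, hTC⟩ := T.exists_preimage_norm_le hT
  choose g hg using fun n : ℕ =>
    T.exists_continuous_approx_rightInverse_s6 hC.le hTC (ε := (1 / 2) ^ n) (by positivity)
  set r := T.correctionResidual (fun n => g n)
  set x : ℕ → Y → X := fun n y => g n (r n y)
  have hxc (n : ℕ) : Continuous (x n) :=
    (g n).continuous.comp (T.continuous_correctionResidual (fun n => (g n).continuous) n)
  have hx := T.norm_correction_succ_le hC.le hg
  have hu : HasSum (fun n : ℕ => 2 * C * (1 / 2) ^ n) (2 * C * 2) :=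
    hasSum_geometric_two.mul_left _
  have hsum (y : Y) : Summable fun n => x n y :=
    (summable_nat_add_iff 1).1 (hu.summable.of_norm_bounded (hx · y))
  refine ⟨fun y => ∑' n, x n y, ?_, fun y => ?_, 5 * C, by positivity, fun y => ?_⟩
  · -- only the first correction is unbounded in `y`; the tail converges uniformly
    simp_rw [fun y => (hsum y).tsum_eq_zero_add]
    exact (hxc 0).add (continuous_tsum (fun n => hxc (n + 1)) hu.summable hx)
  · have hr0 : Tendsto (r · y) atTop (nhds 0) :=
      (tendsto_add_atTop_iff_nat 1).1 <|
        squeeze_zero_norm (T.norm_correctionResidual_succ_le (fun n y => (hg n y).1) · y)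
          (tendsto_pow_atTop_nhds_zero_of_lt_one (by norm_num) (by norm_num))
    have hlim : Tendsto (fun N => ∑ n ∈ Finset.range N, T (x n y)) atTop
        (nhds y) := by
      have := (tendsto_const_nhds (x := y)).sub hr0
      rw [sub_zero] at this
      exact this.congr fun N => (T.sum_range_map_eq_sub_correctionResidual _ N y).symm
    exact tendsto_nhds_unique ((hsum y).hasSum.mapL T).tendsto_sum_nat hlim
  · show ‖∑' n, x n y‖ ≤ _
    rw [(hsum y).tsum_eq_zero_add]
    calc ‖x 0 y + ∑' n, x (n + 1) y‖ ≤ C * (‖y‖ + 1) + 2 * C * 2 :=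
          (norm_add_le _ _).trans <| add_le_add
            (by simpa [x, r, correctionResidual] using (hg 0 y).2)
            (tsum_of_norm_bounded hu (hx · y))
      _ ≤ 5 * C * (‖y‖ + 1) := by nlinarith [norm_nonneg y]

theorem exists_continuous_rightInverse_map_zero [CompleteSpace X] [CompleteSpace Y]
    (T : X →L[ℝ] Y) (hT : Function.Surjective T) :
    ∃ s : Y → X, Continuous s ∧ Function.RightInverse s T ∧ s 0 = 0 := by
  obtain ⟨s, hsc, hs, -⟩ := T.exists_continuous_rightInverse hT
  exact ⟨fun y => s y - s 0, hsc.sub continuous_const, fun y => by simp [hs y, hs 0],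
    sub_self _⟩

theorem exists_continuous_lift_eqOn [CompleteSpace X] [CompleteSpace Y]
    {Z : Type*} [TopologicalSpace Z] (T : X →L[ℝ] Y) (hT : Function.Surjective T)
    {f : Z → Y} (hf : Continuous f) {c : Z → X} (hc : Continuous c) {S : Set Z}
    (hcS : ∀ z ∈ S, T (c z) = f z) :
    ∃ M : Z → X, Continuous M ∧ (∀ z, T (M z) = f z) ∧ Set.EqOn M c S := by
  obtain ⟨s, hsc, hs, hs0⟩ := T.exists_continuous_rightInverse_map_zero hT
  exact ⟨fun z => c z + s (f z - T (c z)), hc.add (hsc.comp (hf.sub (T.continuous.comp hc))),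
    fun z => by simp [hs _], fun z hz => by simp [hcS z hz, hs0]⟩

theorem compLeftContinuousBounded_surjective [CompleteSpace X] [CompleteSpace Y]
    (α : Type*) [TopologicalSpace α] (T : X →L[ℝ] Y) (hT : Function.Surjective T) :
    Function.Surjective (T.compLeftContinuousBounded α) := by
  obtain ⟨s, hsc, hs, C, hC0, hC⟩ := T.exists_continuous_rightInverse hT
  refine fun f => ⟨.ofNormedAddCommGroup (s ∘ f) (hsc.comp f.continuous) (C * (‖f‖ + 1))
    fun t => (hC _).trans ?_, ?_⟩
  · gcongr
    exact f.norm_coe_le_norm t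
  · ext t
    exact hs (f t)

end ContinuousLinearMap

theorem Submodule.exists_continuous_retraction [CompleteSpace X] (A : Submodule ℝ X)
    (hA : IsClosed (A : Set X)) :
    ∃ r : X → X, Continuous r ∧ (∀ x, r x ∈ A) ∧ ∀ a ∈ A, r a = a := by
  have : IsClosed (A : Set X) := hA
  obtain ⟨s, hsc, hs, hs0⟩ :=
    A.mkQL.exists_continuous_rightInverse_map_zero A.mkQ_surjective
  refine ⟨fun x => x - s (A.mkQL x), continuous_id.sub (hsc.comp A.mkQL.continuous),
    fun x => ?_, fun a ha => ?_⟩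
  · rw [← Submodule.Quotient.mk_eq_zero]
    simpa [sub_eq_zero] using (hs (A.mkQL x)).symm
  · simp [(Submodule.Quotient.mk_eq_zero A).2 ha, hs0]

end BartleGraves

namespace BoundedContinuousFunction

theorem lipschitzWith_one_const (α β : Type*) [TopologicalSpace α] [PseudoMetricSpace β] :
    LipschitzWith 1 (const α : β → α →ᵇ β) :=
  LipschitzWith.of_dist_le_mul fun x y => by simpa using (dist_le dist_nonneg).2 fun _ => le_rfl

theorem exists_forall_dist_apply_lt_of_continuousAt {α Z E : Type*} [TopologicalSpace α]
    [PseudoMetricSpace Z] [PseudoMetricSpace E] {M : Z → α →ᵇ E} {z : Z}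
    (hM : ContinuousAt M z) {ε : ℝ} (hε : 0 < ε) :
    ∃ δ > 0, ∀ z', dist z' z < δ → ∀ t, dist (M z' t) (M z t) < ε := by
  obtain ⟨δ, hδ, h⟩ := Metric.continuousAt_iff.1 hM ε hε
  exact ⟨δ, hδ, fun z' hz' t => (dist_coe_le_dist t).trans_lt (h hz')⟩

end BoundedContinuousFunction

noncomputable def NonUnitalStarAlgHom.toRealContinuousLinearMap {A B : Type*}
    [NonUnitalCStarAlgebra A] [NonUnitalCStarAlgebra B] (f : A →⋆ₙₐ[ℂ] B) : A →L[ℝ] B :=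
  ⟨(LinearMapClass.linearMap f).restrictScalars ℝ, map_continuous f⟩

@[simp]
theorem NonUnitalStarAlgHom.coe_toRealContinuousLinearMap {A B : Type*}
    [NonUnitalCStarAlgebra A] [NonUnitalCStarAlgebra B] (f : A →⋆ₙₐ[ℂ] B) :
    ⇑f.toRealContinuousLinearMap = f :=
  rfl

/-- `θ : D → DJ` models the quotient map `D → D/J`, and `κ` the quotient map of
`C_b([1,∞), D/J)` onto the asymptotic algebra `QDJ`. -/
theorem exists_equicontinuous_relative_lift_general
    {B D DJ QDJ : Type*}
    [NonUnitalCStarAlgebra B] [NonUnitalCStarAlgebra D] [NonUnitalCStarAlgebra DJ]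
    [NonUnitalCStarAlgebra QDJ]
    (A : NonUnitalStarSubalgebra ℂ B) (hA : IsClosed (A : Set B))
    (θ : D →⋆ₙₐ[ℂ] DJ) (hθ : Function.Surjective θ)
    (κ : BoundedContinuousFunction (Set.Ici (1 : ℝ)) DJ →⋆ₙₐ[ℂ] QDJ)
    (hκ : Function.Surjective κ)
    (φ : B →⋆ₙₐ[ℂ] QDJ) (ρ : A →⋆ₙₐ[ℂ] DJ)
    (hρ : ∀ a : A, φ (a : B) = κ (const _ (ρ a))) :
    ∃ L : Set.Ici (1 : ℝ) → B → D,
      -- (1) joint continuity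
      Continuous (fun z : Set.Ici (1 : ℝ) × B => L z.1 z.2) ∧
      -- (2) equicontinuity
      (∀ b : B, ∀ ε > (0 : ℝ), ∃ δ > (0 : ℝ), ∀ c : B, ‖c - b‖ < δ →
        ∀ t : Set.Ici (1 : ℝ), ‖L t c - L t b‖ < ε) ∧
      -- (3) boundedness in `t`
      (∀ b : B, ∃ C : ℝ, ∀ t : Set.Ici (1 : ℝ), ‖L t b‖ ≤ C) ∧
      -- (4) `t ↦ θ (L t b)` is a bounded continuous lift of `φ b`
      (∀ b : B, ∃ y : BoundedContinuousFunction (Set.Ici (1 : ℝ)) DJ,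
        (∀ t : Set.Ici (1 : ℝ), y t = θ (L t b)) ∧ κ y = φ b) ∧
      -- (5) `t ↦ L t a` is constant for `a ∈ A`
      (∀ a : A, ∀ t t' : Set.Ici (1 : ℝ), L t (a : B) = L t' (a : B)) := by
  -- as an instance this makes `A` a C⋆-algebra, so that `ρ` is continuous
  have : IsClosed (A : Set B) := hA
  let Θ := θ.toRealContinuousLinearMap.compLeftContinuousBounded (Set.Ici (1 : ℝ))
  let K := κ.toRealContinuousLinearMap.comp Θ
  obtain ⟨sθ, hsθc, hsθ, -⟩ := θ.toRealContinuousLinearMap.exists_continuous_rightInverse hθ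
  obtain ⟨r, hrc, hrA, hr⟩ :=
    (A.toNonUnitalSubalgebra.toSubmodule.restrictScalars ℝ).exists_continuous_retraction hA
  let c : B → Set.Ici (1 : ℝ) →ᵇ D := fun b => const _ (sθ (ρ ⟨r b, hrA b⟩))
  have hc : Continuous c := (lipschitzWith_one_const _ _).continuous.comp
    (hsθc.comp ((map_continuous ρ).comp (hrc.subtype_mk hrA)))
  have hcA (a : B) (ha : a ∈ A) : K (c a) = φ a := by
    rw [hρ ⟨a, ha⟩]
    show κ (Θ (c a)) = _
    congr 1
    ext t
    simp [Θ, c, hr a ha, hsθ _]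
  obtain ⟨M, hMc, hM, hMA⟩ := K.exists_continuous_lift_eqOn
    (hκ.comp (θ.toRealContinuousLinearMap.compLeftContinuousBounded_surjective _ hθ))
    (map_continuous φ) hc hcA
  refine ⟨fun t b => M b t, continuous_eval.comp ((hMc.comp continuous_snd).prodMk continuous_fst),
    fun b ε hε => ?_, fun b => ⟨‖M b‖, (M b).norm_coe_le_norm⟩,
    fun b => ⟨Θ (M b), fun t => rfl, hM b⟩, fun a t t' => by simp [hMA a.2, c]⟩
  simpa [dist_eq_norm] using exists_forall_dist_apply_lt_of_continuousAt hMc.continuousAt hε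

/-- Relative lifting of a homomorphism into an asymptotic algebra to an equicontinuous
family of set-theoretic lifts (Lemma 1.3 of the paper).  Here `θ : D → D/J` is the
quotient map by a closed two-sided ideal `J` (represented as a surjective
⋆-homomorphism onto a C*-algebra `DJ` with kernel `J`), and
`κ : C_b([1,∞), D/J) → C_b([1,∞), D/J)/C₀([1,∞), D/J)` is the quotient map onto the
asymptotic algebra (represented as a surjective ⋆-homomorphism onto a C*-algebra `QDJ`
whose kernel is the functions vanishing at infinity). -/
theorem exists_equicontinuous_relative_lift
    {B D DJ QDJ : Type*}
    [NonUnitalCStarAlgebra B] [NonUnitalCStarAlgebra D] [NonUnitalCStarAlgebra DJ]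
    [NonUnitalCStarAlgebra QDJ]
    (A : NonUnitalStarSubalgebra ℂ B) (hA : IsClosed (A : Set B))
    (J : TwoSidedIdeal D) (hJ : IsClosed (J : Set D))
    (θ : D →⋆ₙₐ[ℂ] DJ) (hθ : Function.Surjective θ)
    (hkerθ : ∀ d : D, θ d = 0 ↔ d ∈ J)
    (κ : BoundedContinuousFunction (Set.Ici (1 : ℝ)) DJ →⋆ₙₐ[ℂ] QDJ)
    (hκ : Function.Surjective κ)
    (hkerκ : ∀ f : BoundedContinuousFunction (Set.Ici (1 : ℝ)) DJ,
      κ f = 0 ↔ Tendsto (fun t : Set.Ici (1 : ℝ) => ‖f t‖) atTop (nhds 0))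
    (φ : B →⋆ₙₐ[ℂ] QDJ) (ρ : A →⋆ₙₐ[ℂ] DJ)
    (hρ : ∀ a : A, φ (a : B) = κ (const _ (ρ a))) :
    ∃ L : Set.Ici (1 : ℝ) → B → D,
      -- (1) joint continuity
      Continuous (fun z : Set.Ici (1 : ℝ) × B => L z.1 z.2) ∧
      -- (2) equicontinuity
      (∀ b : B, ∀ ε > (0 : ℝ), ∃ δ > (0 : ℝ), ∀ c : B, ‖c - b‖ < δ →
        ∀ t : Set.Ici (1 : ℝ), ‖L t c - L t b‖ < ε) ∧
      -- (3) boundedness in `t`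
      (∀ b : B, ∃ C : ℝ, ∀ t : Set.Ici (1 : ℝ), ‖L t b‖ ≤ C) ∧
      -- (4) `t ↦ θ (L t b)` is a bounded continuous lift of `φ b`
      (∀ b : B, ∃ y : BoundedContinuousFunction (Set.Ici (1 : ℝ)) DJ,
        (∀ t : Set.Ici (1 : ℝ), y t = θ (L t b)) ∧ κ y = φ b) ∧
      -- (5) `t ↦ L t a` is constant for `a ∈ A`
      (∀ a : A, ∀ t t' : Set.Ici (1 : ℝ), L t (a : B) = L t' (a : B)) :=
  exists_equicontinuous_relative_lift_general A hA θ hθ κ hκ φ ρ hρ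
end

section
/- Let S be the unilateral shift on ℓ²(ℕ) (the isometry sending the n-th standard basis vector to the (n+1)-st), and let π : B(ℓ²(ℕ)) → Q be the quotient map onto the Calkin algebra. Then there is no element y ∈ Q with y² = π(S). -/
/-!
An operator that is invertible modulo compact operators is Fredholm, and the index
`dim ker - dim coker` is additive under composition and vanishes on compact perturbations of the
identity (a compact operator is a small perturbation of a finite-rank one). If `π(T)² = π(S)`,
then `π(T²)` is inverted by `π(S*)`, so `index S* + 2 · index T = 0`. But `S*` is surjective with
one-dimensional kernel, so `index S* = 1` is odd.
-/

open Module Submodule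

namespace LinearMap

variable {k V W U : Type*} [DivisionRing k] [AddCommGroup V] [Module k V]
  [AddCommGroup W] [Module k W] [AddCommGroup U] [Module k U]

theorem finiteDimensional_ker_comp (g : W →ₗ[k] U) (f : V →ₗ[k] W)
    [FiniteDimensional k f.ker] [FiniteDimensional k g.ker] :
    FiniteDimensional k (g ∘ₗ f).ker := by
  rw [ker_comp]; infer_instance

theorem finiteDimensional_coker_comp (g : W →ₗ[k] U) (f : V →ₗ[k] W)
    [FiniteDimensional k (W ⧸ f.range)] [FiniteDimensional k (U ⧸ g.range)] :
    FiniteDimensional k (U ⧸ (g ∘ₗ f).range) := by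
  rw [range_comp]; infer_instance

theorem finiteDimensional_ker_of_comp (g : W →ₗ[k] U) (f : V →ₗ[k] W)
    [FiniteDimensional k (g ∘ₗ f).ker] : FiniteDimensional k f.ker :=
  Submodule.finiteDimensional_of_le (ker_le_ker_comp f g)

theorem finiteDimensional_coker_of_comp (g : W →ₗ[k] U) (f : V →ₗ[k] W)
    [FiniteDimensional k (U ⧸ (g ∘ₗ f).range)] : FiniteDimensional k (U ⧸ g.range) :=
  Module.Finite.of_surjective _ (factor_surjective (range_comp_le_range f g))

section FiniteRankPerturbation

variable (f : V →ₗ[k] V)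

theorem mem_range_of_add_apply_mem_range {x : V} (hx : x + f x ∈ f.range) : x ∈ f.range := by
  simpa using sub_mem hx (mem_range_self f x)

theorem ker_id_add_le_range : (id + f).ker ≤ f.range := fun x hx =>
  mem_range_of_add_apply_mem_range f (by rw [show x + f x = 0 from hx]; exact zero_mem _)

/-- `id + f` preserves `range f` and induces the identity on `V ⧸ range f`, so its kernel and
cokernel are those of this restriction. -/
abbrev idAddRestrict : f.range →ₗ[k] f.range :=
  (id + f).restrict fun x hx => add_mem hx (mem_range_self f x)

theorem finrank_ker_idAddRestrict :
    finrank k (idAddRestrict f).ker = finrank k (id + f).ker := by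
  rw [ker_restrict]
  exact (comapSubtypeEquivOfLe (ker_id_add_le_range f)).finrank_eq

noncomputable def cokerIdAddRestrictEquiv :
    (f.range ⧸ (idAddRestrict f).range) ≃ₗ[k] V ⧸ (id + f).range := by
  refine .ofBijective (mapQ _ _ f.range.subtype ?_) ⟨?_, ?_⟩
  · rintro _ ⟨x, rfl⟩
    exact ⟨x, rfl⟩
  · refine (injective_iff_map_eq_zero _).2 fun q hq => ?_
    obtain ⟨w, rfl⟩ := mkQ_surjective _ q
    obtain ⟨x, hx : x + f x = w⟩ := (Submodule.Quotient.mk_eq_zero _).1 hq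
    have hxf : x ∈ f.range := mem_range_of_add_apply_mem_range f (hx ▸ w.2)
    exact (Submodule.Quotient.mk_eq_zero _).2 ⟨⟨x, hxf⟩, Subtype.ext hx⟩
  · intro q
    obtain ⟨x, rfl⟩ := mkQ_surjective _ q
    refine ⟨Submodule.Quotient.mk ⟨-f x, neg_mem (mem_range_self f x)⟩,
      (Submodule.Quotient.eq _).2 ⟨-x, ?_⟩⟩
    simp only [add_apply, id_coe, id_eq, map_neg, subtype_apply]
    abel

variable [FiniteDimensional k f.range]

theorem finiteDimensional_ker_id_add : FiniteDimensional k (id + f).ker :=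
  Submodule.finiteDimensional_of_le (ker_id_add_le_range f)

theorem finiteDimensional_coker_id_add : FiniteDimensional k (V ⧸ (id + f).range) :=
  (cokerIdAddRestrictEquiv f).finiteDimensional

theorem index_id_add : (id + f).index = 0 := by
  have := index_eq_of_finiteDimensional (f := idAddRestrict f)
  rwa [sub_self, index_eq_finrank_sub, finrank_ker_idAddRestrict,
    (cokerIdAddRestrictEquiv f).finrank_eq] at this

end FiniteRankPerturbation

instance (u : V ≃ₗ[k] W) : FiniteDimensional k (u : V →ₗ[k] W).ker := by
  rw [LinearEquiv.ker]; infer_instance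

instance (u : V ≃ₗ[k] W) : FiniteDimensional k (W ⧸ (u : V →ₗ[k] W).range) := by
  rw [LinearEquiv.range]; infer_instance

section LinearEquivAdd

variable (u : V ≃ₗ[k] W) (f : V →ₗ[k] W)

theorem linearEquiv_add_eq_comp : (u : V →ₗ[k] W) + f = u ∘ₗ (id + u.symm ∘ₗ f) := by
  ext; simp

variable [FiniteDimensional k f.range]

instance : FiniteDimensional k ((u.symm : W →ₗ[k] V) ∘ₗ f).range := by
  rw [range_comp]; exact Module.Finite.map _ _

theorem finiteDimensional_ker_linearEquiv_add :
    FiniteDimensional k ((u : V →ₗ[k] W) + f).ker := by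
  have := finiteDimensional_ker_id_add (u.symm ∘ₗ f)
  rw [linearEquiv_add_eq_comp]
  exact finiteDimensional_ker_comp _ _

theorem finiteDimensional_coker_linearEquiv_add :
    FiniteDimensional k (W ⧸ ((u : V →ₗ[k] W) + f).range) := by
  have := finiteDimensional_coker_id_add (u.symm ∘ₗ f)
  rw [linearEquiv_add_eq_comp]
  exact finiteDimensional_coker_comp _ _

theorem index_linearEquiv_add : ((u : V →ₗ[k] W) + f).index = 0 := by
  have := finiteDimensional_ker_id_add (u.symm ∘ₗ f)
  have := finiteDimensional_coker_id_add (u.symm ∘ₗ f)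
  rw [linearEquiv_add_eq_comp, index_comp, LinearEquiv.index_eq_zero, index_id_add, add_zero]

end LinearEquivAdd

end LinearMap

open Metric ContinuousLinearMap InnerProductSpace
open scoped lp

theorem ContinuousLinearMap.opNorm_le_of_unitClosedBall {𝕜 E F : Type*} [DenselyNormedField 𝕜]
    [NormedAddCommGroup E] [NormedSpace 𝕜 E] [SeminormedAddCommGroup F] [NormedSpace 𝕜 F]
    (f : E →L[𝕜] F) {C : ℝ} (hf : ∀ x ∈ closedBall (0 : E) 1, ‖f x‖ ≤ C) : ‖f‖ ≤ C := by
  rw [← f.sSup_unitClosedBall_eq_norm]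
  exact csSup_le ((nonempty_closedBall.mpr zero_le_one).image _) (by
    rintro _ ⟨x, hx, rfl⟩; exact hf x hx)

section RCLike

variable {𝕜 E F : Type*} [RCLike 𝕜] [NormedAddCommGroup E] [NormedAddCommGroup F]

theorem Submodule.norm_sub_starProjection_le [InnerProductSpace 𝕜 F] (U : Submodule 𝕜 F)
    [U.HasOrthogonalProjection] (y : F) {w : F} (hw : w ∈ U) :
    ‖y - U.starProjection y‖ ≤ ‖y - w‖ := by
  rw [starProjection_minimal]
  exact ciInf_le ⟨0, Set.forall_mem_range.mpr fun _ => norm_nonneg _⟩ (⟨w, hw⟩ : U)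

/-- Project onto the span of a finite `ε / 2`-net of the image of the unit ball. -/
theorem IsCompactOperator.exists_finiteDimensional_range_norm_sub_lt [NormedSpace 𝕜 E]
    [InnerProductSpace 𝕜 F] {K : E →L[𝕜] F} (hK : IsCompactOperator K) {ε : ℝ} (hε : 0 < ε) :
    ∃ G : E →L[𝕜] F, FiniteDimensional 𝕜 (G : E →ₗ[𝕜] F).range ∧ ‖K - G‖ < ε := by
  obtain ⟨t, -, ht, hcover⟩ := finite_approx_of_totallyBounded
    (hK.isCompact_closure_image_closedBall 1).totallyBounded (ε / 2) (half_pos hε)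
  let W := span 𝕜 t
  have : FiniteDimensional 𝕜 W := FiniteDimensional.span_of_finite 𝕜 ht
  refine ⟨W.starProjection ∘L K, Submodule.finiteDimensional_of_le (S₂ := W) ?_,
    (opNorm_le_of_unitClosedBall _ fun x hx => ?_).trans_lt (half_lt_self hε)⟩
  · rintro _ ⟨x, rfl⟩
    exact starProjection_apply_mem W (K x)
  · obtain ⟨y, hyt, hy⟩ := Set.mem_iUnion₂.mp (hcover (subset_closure ⟨x, hx, rfl⟩))
    calc ‖(K - W.starProjection ∘L K) x‖ = ‖K x - W.starProjection (K x)‖ := rfl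
      _ ≤ ‖K x - y‖ := W.norm_sub_starProjection_le _ (subset_span hyt)
      _ ≤ ε / 2 := (mem_ball_iff_norm.mp hy).le

section CompactPerturbation

variable [InnerProductSpace 𝕜 E] [CompleteSpace E] {A B X : E →L[𝕜] E}

/-- `X = (X - G) + G` with `G` of finite rank and `‖(X - G) - 1‖ < 1`. -/
theorem exists_linearEquiv_add_of_isCompactOperator_sub_one
    (hX : IsCompactOperator (X - 1 : E →L[𝕜] E)) :
    ∃ (u : E ≃ₗ[𝕜] E) (G : E →ₗ[𝕜] E), FiniteDimensional 𝕜 G.range ∧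
      (X : E →ₗ[𝕜] E) = u + G := by
  obtain ⟨G, hG, hnorm⟩ := hX.exists_finiteDimensional_range_norm_sub_lt one_pos
  let u := Units.oneSub (1 + G - X) (by rwa [← norm_neg, neg_sub, ← sub_sub])
  refine ⟨(ContinuousLinearEquiv.unitsEquiv 𝕜 E u).toLinearEquiv, G, hG, ?_⟩
  ext x
  simp only [coe_coe, LinearMap.add_apply, LinearEquiv.coe_coe,
    ContinuousLinearEquiv.coe_toLinearEquiv, ContinuousLinearEquiv.unitsEquiv_apply,
    Units.val_oneSub, sub_apply, one_apply_eq_self, add_apply, u]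
  abel

theorem finiteDimensional_ker_of_isCompactOperator_sub_one
    (hX : IsCompactOperator (X - 1 : E →L[𝕜] E)) :
    FiniteDimensional 𝕜 (X : E →ₗ[𝕜] E).ker := by
  obtain ⟨u, G, hG, hXG⟩ := exists_linearEquiv_add_of_isCompactOperator_sub_one hX
  rw [hXG]
  exact LinearMap.finiteDimensional_ker_linearEquiv_add u G

theorem finiteDimensional_coker_of_isCompactOperator_sub_one
    (hX : IsCompactOperator (X - 1 : E →L[𝕜] E)) :
    FiniteDimensional 𝕜 (E ⧸ (X : E →ₗ[𝕜] E).range) := by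
  obtain ⟨u, G, hG, hXG⟩ := exists_linearEquiv_add_of_isCompactOperator_sub_one hX
  rw [hXG]
  exact LinearMap.finiteDimensional_coker_linearEquiv_add u G

theorem index_eq_zero_of_isCompactOperator_sub_one
    (hX : IsCompactOperator (X - 1 : E →L[𝕜] E)) :
    (X : E →ₗ[𝕜] E).index = 0 := by
  obtain ⟨u, G, hG, hXG⟩ := exists_linearEquiv_add_of_isCompactOperator_sub_one hX
  rw [hXG]
  exact LinearMap.index_linearEquiv_add u G

theorem finiteDimensional_ker_of_isCompactOperator_mul_sub_one
    (h : IsCompactOperator (A * X - 1 : E →L[𝕜] E)) :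
    FiniteDimensional 𝕜 (X : E →ₗ[𝕜] E).ker := by
  have := finiteDimensional_ker_of_isCompactOperator_sub_one h
  rw [toLinearMap_mul, Module.End.mul_eq_comp] at this
  exact LinearMap.finiteDimensional_ker_of_comp (A : E →ₗ[𝕜] E) _

theorem finiteDimensional_coker_of_isCompactOperator_mul_sub_one
    (h : IsCompactOperator (X * B - 1 : E →L[𝕜] E)) :
    FiniteDimensional 𝕜 (E ⧸ (X : E →ₗ[𝕜] E).range) := by
  have := finiteDimensional_coker_of_isCompactOperator_sub_one h
  rw [toLinearMap_mul, Module.End.mul_eq_comp] at this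
  exact LinearMap.finiteDimensional_coker_of_comp _ (B : E →ₗ[𝕜] E)

theorem index_add_index_eq_zero_of_isCompactOperator
    (hAX : IsCompactOperator (A * X - 1 : E →L[𝕜] E))
    (hXA : IsCompactOperator (X * A - 1 : E →L[𝕜] E)) :
    (A : E →ₗ[𝕜] E).index + (X : E →ₗ[𝕜] E).index = 0 := by
  have := finiteDimensional_ker_of_isCompactOperator_mul_sub_one hXA
  have := finiteDimensional_coker_of_isCompactOperator_mul_sub_one hAX
  have := finiteDimensional_ker_of_isCompactOperator_mul_sub_one hAX
  have := finiteDimensional_coker_of_isCompactOperator_mul_sub_one hXA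
  rw [← LinearMap.index_comp, ← Module.End.mul_eq_comp, ← toLinearMap_mul]
  exact index_eq_zero_of_isCompactOperator_sub_one hAX

end CompactPerturbation

theorem isCompactOperator_rankOne [NormedSpace 𝕜 E] [InnerProductSpace 𝕜 F] (x : E) (y : F) :
    IsCompactOperator (rankOne 𝕜 x y) :=
  (isCompactOperator_of_locallyCompactSpace_rng (toSpanSingleton 𝕜 x)).comp_clm (innerSL 𝕜 y)

variable [InnerProductSpace 𝕜 E]

theorem HilbertBasis.ext_inner_left {ι : Type*} (b : HilbertBasis ι 𝕜 E) {x y : E}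
    (h : ∀ i, inner 𝕜 (b i) x = inner 𝕜 (b i) y) : x = y :=
  b.repr.injective (lp.ext (funext fun i => by simp only [b.repr_apply_apply, h]))

theorem HilbertBasis.ext_continuousLinearMap {ι : Type*} [NormedSpace 𝕜 F]
    (b : HilbertBasis ι 𝕜 E) {f g : E →L[𝕜] F} (h : ∀ i, f (b i) = g (b i)) : f = g :=
  ContinuousLinearMap.ext_on (dense_iff_topologicalClosure_eq_top.mpr b.dense_span)
    (Set.forall_mem_range.mpr h)

theorem HilbertBasis.ofRepr_refl_apply {ι : Type*} [DecidableEq ι] (i : ι) :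
    HilbertBasis.ofRepr (LinearIsometryEquiv.refl 𝕜 ℓ²(ι, 𝕜)) i = lp.single 2 i 1 :=
  (HilbertBasis.repr_symm_single _ i).symm

def IsUnilateralShift (b : HilbertBasis ℕ 𝕜 E) (S : E →L[𝕜] E) : Prop :=
  ∀ n, S (b n) = b (n + 1)

namespace IsUnilateralShift

variable [CompleteSpace E] {b : HilbertBasis ℕ 𝕜 E} {S : E →L[𝕜] E} (hS : IsUnilateralShift b S)
include hS

theorem adjoint_apply_zero : adjoint S (b 0) = 0 :=
  b.ext_inner_left fun n => by
    rw [adjoint_inner_right, hS, orthonormal_iff_ite.mp b.orthonormal]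
    simp

theorem adjoint_apply_succ (n : ℕ) : adjoint S (b (n + 1)) = b n :=
  b.ext_inner_left fun m => by
    rw [adjoint_inner_right, hS, orthonormal_iff_ite.mp b.orthonormal,
      orthonormal_iff_ite.mp b.orthonormal]
    simp

theorem adjoint_mul_self : adjoint S * S = 1 :=
  b.ext_continuousLinearMap fun n => by simp [hS n, hS.adjoint_apply_succ]

theorem one_sub_mul_adjoint : 1 - S * adjoint S = rankOne 𝕜 (b 0) (b 0) :=
  b.ext_continuousLinearMap fun n => by
    rcases n with _ | n
    · simp [hS.adjoint_apply_zero, rankOne_def, b.orthonormal.norm_eq_one]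
    · simp [hS.adjoint_apply_succ, hS n, rankOne_def, orthonormal_iff_ite.mp b.orthonormal]

theorem adjoint_surjective : Function.Surjective (adjoint S) := fun x =>
  ⟨S x, by simpa using DFunLike.congr_fun hS.adjoint_mul_self x⟩

theorem ker_adjoint : (adjoint S : E →ₗ[𝕜] E).ker = 𝕜 ∙ b 0 := by
  refine le_antisymm (fun x hx => ?_) ((span_singleton_le_iff_mem _ _).2 hS.adjoint_apply_zero)
  have : (1 - S * adjoint S) x = x := by simp [show adjoint S x = 0 from hx]
  rw [hS.one_sub_mul_adjoint, rankOne_def] at this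
  exact mem_span_singleton.2 ⟨_, this⟩

theorem index_adjoint : (adjoint S : E →ₗ[𝕜] E).index = 1 := by
  rw [LinearMap.index_of_surjective hS.adjoint_surjective, hS.ker_adjoint,
    finrank_span_singleton (b.orthonormal.ne_zero 0), Nat.cast_one]

end IsUnilateralShift

end RCLike

/-- The image of the unilateral shift in the Calkin algebra has no square root.
Here `H = ℓ²(ℕ)`, the unilateral shift `S` is characterized by `S eₙ = eₙ₊₁` on the
standard orthonormal basis `eₙ = lp.single 2 n 1`, and the Calkin algebra is
represented as any C*-algebra `Q` together with a surjective ⋆-homomorphism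
`θ : B(ℓ²(ℕ)) → Q` whose kernel is exactly the ideal of compact operators. -/
theorem calkin_shift_has_no_square_root
    (Q : Type) [CStarAlgebra Q]
    (θ : (lp (fun _ : ℕ => ℂ) 2 →L[ℂ] lp (fun _ : ℕ => ℂ) 2) →⋆ₐ[ℂ] Q)
    (hθ : Function.Surjective θ)
    (hker : ∀ T : lp (fun _ : ℕ => ℂ) 2 →L[ℂ] lp (fun _ : ℕ => ℂ) 2,
      θ T = 0 ↔ IsCompactOperator T)
    (S : lp (fun _ : ℕ => ℂ) 2 →L[ℂ] lp (fun _ : ℕ => ℂ) 2)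
    (hS : ∀ n : ℕ, S (lp.single 2 n 1) = lp.single 2 (n + 1) 1) :
    ¬ ∃ y : Q, y * y = θ S := by
  rintro ⟨y, hy⟩
  obtain ⟨T, rfl⟩ := hθ y
  have hshift : IsUnilateralShift (.ofRepr (.refl ℂ _)) S := fun n => by
    simpa only [HilbertBasis.ofRepr_refl_apply] using hS n
  set A := adjoint S
  have hSA : θ (S * A) = 1 := by
    have := (hker _).2 (hshift.one_sub_mul_adjoint ▸ isCompactOperator_rankOne _ _)
    rwa [map_sub, map_one, sub_eq_zero, eq_comm] at this
  have hL : IsCompactOperator (A * T * T - 1 : _ →L[ℂ] _) := (hker _).1 (by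
    rw [map_sub, map_mul, map_mul, mul_assoc, hy, ← map_mul, hshift.adjoint_mul_self, map_one,
      sub_self])
  have hR : IsCompactOperator (T * (T * A) - 1 : _ →L[ℂ] _) := (hker _).1 (by
    rw [map_sub, map_mul, map_mul, ← mul_assoc, hy, ← map_mul, hSA, map_one, sub_self])
  have := finiteDimensional_ker_of_isCompactOperator_mul_sub_one hL
  have := finiteDimensional_coker_of_isCompactOperator_mul_sub_one hR
  have hTT : ((T * T : ℓ²(ℕ, ℂ) →L[ℂ] ℓ²(ℕ, ℂ)) : ℓ²(ℕ, ℂ) →ₗ[ℂ] ℓ²(ℕ, ℂ)).index =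
      2 * (T : ℓ²(ℕ, ℂ) →ₗ[ℂ] ℓ²(ℕ, ℂ)).index := by
    rw [toLinearMap_mul, Module.End.mul_eq_comp, LinearMap.index_comp, two_mul]
  have := index_add_index_eq_zero_of_isCompactOperator (A := A) (X := T * T)
    (by rw [← mul_assoc]; exact hL) (by rw [mul_assoc]; exact hR)
  rw [hshift.index_adjoint, hTT] at this
  omega
end
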